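/- (Sufficient condition, third-order branch.) Let f : ℝ → ℝ be infinitely differentiable, x ∈ ℝ, and d₀ = 1/10, d₁ = 6/10, d₂ = 3/10. Suppose ω₀⁺, ω₁⁺, ω₂⁺, ω₀⁻, ω₁⁻, ω₂⁻ : (0,δ) → ℝ satisfy ω₀^±(h) + ω₁^±(h) + ω₂^±(h) = 1 for all h and ωₖ^±(h) − dₖ = O(h³) as h → 0⁺ for each k. Then (1/h)·(Σₖ ωₖ⁺(h)·f̂ᵏ(x,h) − Σₖ ωₖ⁻(h)·f̂ᵏ(x−h,h)) − f′(x) = O(h⁵) as h → 0⁺; i.e., the resulting WENO scheme attains the optimal fifth order of accuracy. -/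

import Mathlib

open Filter Asymptotics Topology

lemma mvt_bigO (g : ℝ → ℝ) (n : ℕ) (hg0 : g 0 = 0) (hg : Differentiable ℝ g)
    (hd : (deriv g) =O[𝓝 (0:ℝ)] fun t => t ^ n) :
    g =O[𝓝 (0:ℝ)] fun t => t ^ (n+1) := by
  obtain ⟨C, hC⟩ := hd.bound
  rw [Metric.eventually_nhds_iff] at hC
  obtain ⟨r, hr, hCr⟩ := hC
  rw [isBigO_iff]
  refine ⟨|C|, ?_⟩
  rw [Metric.eventually_nhds_iff]
  refine ⟨r, hr, fun {t} ht => ?_⟩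
  have habs : |t| < r := by simpa [Real.dist_eq] using ht
  have key : ‖g t - g 0‖ ≤ (|C| * |t|^n) * ‖t - 0‖ := by
    refine (convex_Icc (-|t|) (|t|)).norm_image_sub_le_of_norm_deriv_le
      (fun y _ => hg.differentiableAt) ?_ ⟨by simp [neg_abs_le], by simp [le_abs_self]⟩
      ⟨neg_abs_le t, le_abs_self t⟩
    intro y hy
    have hyt : |y| ≤ |t| := abs_le.2 hy
    have h2 : ‖deriv g y‖ ≤ C * ‖y ^ n‖ := hCr (by simpa [Real.dist_eq] using hyt.trans_lt habs)
    calc ‖deriv g y‖ ≤ C * ‖y ^ n‖ := h2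
      _ ≤ |C| * |t|^n := by
          rw [Real.norm_eq_abs, abs_pow]
          exact mul_le_mul (le_abs_self C) (pow_le_pow_left₀ (abs_nonneg _) hyt n)
            (by positivity) (abs_nonneg _)
  rw [hg0, sub_zero, sub_zero] at key
  calc ‖g t‖ ≤ (|C| * |t|^n) * ‖t‖ := key
    _ = |C| * ‖t ^ (n+1)‖ := by rw [Real.norm_eq_abs, Real.norm_eq_abs, abs_pow]; ring

lemma taylor_bigO : ∀ (n : ℕ) (f : ℝ → ℝ), ContDiff ℝ ((⊤ : ℕ∞) : WithTop ℕ∞) f → ∀ x : ℝ,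
    (fun t => f (x + t) - ∑ i ∈ Finset.range (n+1), iteratedDeriv i f x / i.factorial * t ^ i)
      =O[𝓝 (0:ℝ)] fun t => t ^ (n+1) := by
  intro n
  induction n with
  | zero =>
    intro f hf x
    have hd : Differentiable ℝ f := hf.differentiable (by simp)
    apply mvt_bigO
    · simp
    · exact (hd.comp (differentiable_id.const_add x)).sub (by fun_prop)
    · have hder : ∀ t : ℝ, deriv (fun t => f (x + t) -
          ∑ i ∈ Finset.range 1, iteratedDeriv i f x / i.factorial * t ^ i) t
          = deriv f (x + t) := by
        intro t
        have h1 : HasDerivAt (fun t : ℝ => f (x + t)) (deriv f (x + t)) t := by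
          simpa [Function.comp_def] using (hd (x + t)).hasDerivAt.comp t ((hasDerivAt_id t).const_add x)
        have h2 : HasDerivAt (fun t : ℝ => f (x + t) -
            ∑ i ∈ Finset.range 1, iteratedDeriv i f x / i.factorial * t ^ i)
            (deriv f (x + t)) t := by
          simpa using h1.fun_sub (hasDerivAt_const t (iteratedDeriv 0 f x / 1))
        exact h2.deriv
      have : Tendsto (fun t : ℝ => deriv f (x + t)) (𝓝 0) (𝓝 (deriv f x)) := by
        have hc : Continuous (deriv f) := ((contDiff_infty_iff_deriv.mp hf).2).continuous
        simpa [Function.comp_def] using (hc.comp (continuous_const.add continuous_id)).tendsto 0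
      have heq : (deriv fun t => f (x + t) -
          ∑ i ∈ Finset.range (0+1), iteratedDeriv i f x / i.factorial * t ^ i)
          = fun t => deriv f (x + t) := funext hder
      rw [heq]
      simpa using this.isBigO_one ℝ
  | succ n ih =>
    intro f hf x
    have hd : Differentiable ℝ f := hf.differentiable (by simp)
    have hf' : ContDiff ℝ ((⊤ : ℕ∞) : WithTop ℕ∞) (deriv f) := (contDiff_infty_iff_deriv.mp hf).2
    apply mvt_bigO
    · simp [Finset.sum_range_succ']
    · exact (hd.comp (differentiable_id.const_add x)).sub (by fun_prop)
    · have hder : ∀ t : ℝ, deriv (fun t => f (x + t) -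
          ∑ i ∈ Finset.range (n+2), iteratedDeriv i f x / i.factorial * t ^ i) t
          = deriv f (x + t) -
            ∑ i ∈ Finset.range (n+1), iteratedDeriv i (deriv f) x / i.factorial * t ^ i := by
        intro t
        have h1 : HasDerivAt (fun t : ℝ => f (x + t)) (deriv f (x + t)) t := by
          simpa [Function.comp_def] using (hd (x + t)).hasDerivAt.comp t ((hasDerivAt_id t).const_add x)
        have h2 : HasDerivAt (fun t : ℝ =>
            ∑ i ∈ Finset.range (n+2), iteratedDeriv i f x / i.factorial * t ^ i)
            (∑ i ∈ Finset.range (n+2), iteratedDeriv i f x / i.factorial * (i * t ^ (i-1))) t := by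
          apply HasDerivAt.fun_sum
          intro i _
          exact (hasDerivAt_pow i t).const_mul _
        have hsum_eq : (∑ i ∈ Finset.range (n+2), iteratedDeriv i f x / i.factorial * (i * t ^ (i-1)))
            = ∑ i ∈ Finset.range (n+1), iteratedDeriv i (deriv f) x / i.factorial * t ^ i := by
          rw [Finset.sum_range_succ']
          simp only [Nat.cast_zero, pow_zero]
          rw [show (iteratedDeriv 0 f x / (Nat.factorial 0) * (0 * t ^ (0-1))) = 0 by simp]
          rw [add_zero]
          apply Finset.sum_congr rfl
          intro i _
          rw [← iteratedDeriv_succ']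
          have hfac : ((i+1).factorial : ℝ) = (i+1) * i.factorial := by
            rw [Nat.factorial_succ]; push_cast; ring
          rw [hfac]
          have h1 : ((i:ℝ)+1) ≠ 0 := by positivity
          have h2 : (i.factorial : ℝ) ≠ 0 := Nat.cast_ne_zero.2 i.factorial_ne_zero
          field_simp
          simp only [Nat.add_sub_cancel, Nat.add_sub_cancel_left, Nat.cast_add, Nat.cast_one]
        have := (h1.fun_sub h2).deriv
        rw [this, hsum_eq]
      have hih := ih (deriv f) hf' x
      have heq : (deriv fun t => f (x + t) -
          ∑ i ∈ Finset.range (n+1+1), iteratedDeriv i f x / i.factorial * t ^ i)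
          = fun t => deriv f (x + t) -
            ∑ i ∈ Finset.range (n+1), iteratedDeriv i (deriv f) x / i.factorial * t ^ i :=
        funext hder
      rw [heq]
      exact hih

/-- The three candidate flux values at the right interface of the cell centered
at `y` with mesh size `h`. -/
noncomputable def candidateFlux (f : ℝ → ℝ) (y h : ℝ) : Fin 3 → ℝ :=
  ![(2 * f (y - 2*h) - 7 * f (y - h) + 11 * f y) / 6,
    (-f (y - h) + 5 * f y + 2 * f (y + h)) / 6,
    (2 * f y + 5 * f (y + h) - f (y + 2*h)) / 6]

/-- The linear (ideal) weights `d₀ = 1/10`, `d₁ = 6/10`, `d₂ = 3/10`. -/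
noncomputable def dlin : Fin 3 → ℝ := ![1/10, 6/10, 3/10]

/-- Sufficient condition, third-order branch: if the nonlinear weights sum to one
and satisfy `ωₖ^± − dₖ = O(h³)`, then the WENO scheme attains the optimal fifth
order of accuracy. -/
theorem weno_sufficient_condition_third_order (f : ℝ → ℝ) (hf : ContDiff ℝ (⊤ : ℕ∞) f)
    (x : ℝ) (δ : ℝ) (hδ : 0 < δ) (ωp ωm : Fin 3 → ℝ → ℝ)
    (hsum : ∀ h ∈ Set.Ioo (0:ℝ) δ, (∑ k : Fin 3, ωp k h) = 1 ∧ (∑ k : Fin 3, ωm k h) = 1)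
    (hO : ∀ k : Fin 3,
        ((fun h : ℝ => ωp k h - dlin k) =O[𝓝[>] (0:ℝ)] fun h => h ^ 3)
      ∧ ((fun h : ℝ => ωm k h - dlin k) =O[𝓝[>] (0:ℝ)] fun h => h ^ 3)) :
    (fun h : ℝ =>
        (1/h) * ((∑ k : Fin 3, ωp k h * candidateFlux f x h k)
          - (∑ k : Fin 3, ωm k h * candidateFlux f (x - h) h k)) - deriv f x)
      =O[𝓝[>] (0:ℝ)] fun h => h ^ 5 := by
  have hf' : ContDiff ℝ ((⊤:ℕ∞) : WithTop ℕ∞) f := hf.of_le (by simp)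
  have hTendsto : ∀ c : ℝ, Filter.Tendsto (fun h : ℝ => c * h) (𝓝[>] (0:ℝ)) (𝓝 (0:ℝ)) := by
    intro c
    have h1 : Filter.Tendsto (fun h : ℝ => c * h) (𝓝 (0:ℝ)) (𝓝 (0:ℝ)) := by
      simpa using (continuous_mul_left c).tendsto (0:ℝ)
    exact h1.mono_left nhdsWithin_le_nhds
  have hcomp : ∀ (Rf : ℝ → ℝ) (m : ℕ), Rf =O[𝓝 (0:ℝ)] (fun t => t ^ m) →
      ∀ c : ℝ, (fun h : ℝ => Rf (c * h)) =O[𝓝[>] (0:ℝ)] fun h => h ^ m := by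
    intro Rf m hRf c
    have h1 := hRf.comp_tendsto (hTendsto c)
    simp only [Function.comp_def] at h1
    have h3 : (fun h : ℝ => (c * h) ^ m) =O[𝓝[>] (0:ℝ)] fun h => h ^ m :=
      (isBigO_const_mul_self (c ^ m) (fun h : ℝ => h ^ m) _).congr_left fun h => by ring
    exact h1.trans h3
  set R3 : ℝ → ℝ := fun t => f (x + t) - (iteratedDeriv 0 f x + iteratedDeriv 1 f x * t
      + iteratedDeriv 2 f x / 2 * t ^ 2) with hR3def
  have hR3 : R3 =O[𝓝 (0:ℝ)] fun t => t ^ 3 := by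
    refine (taylor_bigO 2 f hf' x).congr_left fun t => ?_
    rw [hR3def]
    simp [Finset.sum_range_succ, Nat.factorial]
  set R6 : ℝ → ℝ := fun t => f (x + t) - (iteratedDeriv 0 f x + iteratedDeriv 1 f x * t
      + iteratedDeriv 2 f x / 2 * t ^ 2 + iteratedDeriv 3 f x / 6 * t ^ 3
      + iteratedDeriv 4 f x / 24 * t ^ 4 + iteratedDeriv 5 f x / 120 * t ^ 5) with hR6def
  have hR6 : R6 =O[𝓝 (0:ℝ)] fun t => t ^ 6 := by
    refine (taylor_bigO 5 f hf' x).congr_left fun t => ?_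
    rw [hR6def]
    simp [Finset.sum_range_succ, Nat.factorial]
  have hval3 : ∀ t : ℝ, f (x + t) = iteratedDeriv 0 f x + iteratedDeriv 1 f x * t
      + iteratedDeriv 2 f x / 2 * t ^ 2 + R3 t := by
    intro t; rw [hR3def]; ring
  have hval6 : ∀ t : ℝ, f (x + t) = iteratedDeriv 0 f x + iteratedDeriv 1 f x * t
      + iteratedDeriv 2 f x / 2 * t ^ 2 + iteratedDeriv 3 f x / 6 * t ^ 3
      + iteratedDeriv 4 f x / 24 * t ^ 4 + iteratedDeriv 5 f x / 120 * t ^ 5 + R6 t := by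
    intro t; rw [hR6def]; ring
  have hA1 : (fun h : ℝ => candidateFlux f x h 1 - candidateFlux f x h 0)
      =O[𝓝[>] (0:ℝ)] fun h => h ^ 3 := by
    have b := ((((hcomp R3 3 hR3 (-2)).const_mul_left ((-1:ℝ)/3)).add
      ((hcomp R3 3 hR3 (-1)).const_mul_left (1:ℝ))).add
      ((hcomp R3 3 hR3 0).const_mul_left ((-1:ℝ)))).add
      ((hcomp R3 3 hR3 1).const_mul_left ((1:ℝ)/3))
    refine b.congr_left fun h => ?_
    simp only [candidateFlux, Matrix.cons_val_one, Matrix.head_cons, Matrix.cons_val_zero]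
    rw [show x - 2*h = x + (-2)*h by ring, show x + h = x + 1*h by ring,
      show x - h = x + (-1)*h by ring,
      show f x = f (x + 0*h) by rw [show x + 0*h = x by ring],
      hval3 ((-2)*h), hval3 ((-1)*h), hval3 (0*h), hval3 (1*h)]
    ring
  have hA2 : (fun h : ℝ => candidateFlux f x h 2 - candidateFlux f x h 0)
      =O[𝓝[>] (0:ℝ)] fun h => h ^ 3 := by
    have b := (((((hcomp R3 3 hR3 (-2)).const_mul_left ((-1:ℝ)/3)).add
      ((hcomp R3 3 hR3 (-1)).const_mul_left ((7:ℝ)/6))).add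
      ((hcomp R3 3 hR3 0).const_mul_left ((-3:ℝ)/2))).add
      ((hcomp R3 3 hR3 1).const_mul_left ((5:ℝ)/6))).add
      ((hcomp R3 3 hR3 2).const_mul_left ((-1:ℝ)/6))
    refine b.congr_left fun h => ?_
    simp only [candidateFlux, Matrix.cons_val_one, Matrix.head_cons, Matrix.cons_val_zero,
      Matrix.cons_val_two, Matrix.tail_cons]
    rw [show x - 2*h = x + (-2)*h by ring, show x + 2*h = x + 2*h by ring,
      show x + h = x + 1*h by ring, show x - h = x + (-1)*h by ring,
      show f x = f (x + 0*h) by rw [show x + 0*h = x by ring],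
      hval3 ((-2)*h), hval3 ((-1)*h), hval3 (0*h), hval3 (1*h), hval3 (2*h)]
    ring
  have hB1 : (fun h : ℝ => candidateFlux f (x-h) h 1 - candidateFlux f (x-h) h 0)
      =O[𝓝[>] (0:ℝ)] fun h => h ^ 3 := by
    have b := ((((hcomp R3 3 hR3 (-3)).const_mul_left ((-1:ℝ)/3)).add
      ((hcomp R3 3 hR3 (-2)).const_mul_left (1:ℝ))).add
      ((hcomp R3 3 hR3 (-1)).const_mul_left ((-1:ℝ)))).add
      ((hcomp R3 3 hR3 0).const_mul_left ((1:ℝ)/3))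
    refine b.congr_left fun h => ?_
    simp only [candidateFlux, Matrix.cons_val_one, Matrix.head_cons, Matrix.cons_val_zero]
    rw [show x - h - 2*h = x + (-3)*h by ring, show x - h - h = x + (-2)*h by ring,
      show x - h + h = x + 0*h by ring, show x - h = x + (-1)*h by ring,
      hval3 ((-3)*h), hval3 ((-2)*h), hval3 ((-1)*h), hval3 (0*h)]
    ring
  have hB2 : (fun h : ℝ => candidateFlux f (x-h) h 2 - candidateFlux f (x-h) h 0)
      =O[𝓝[>] (0:ℝ)] fun h => h ^ 3 := by
    have b := (((((hcomp R3 3 hR3 (-3)).const_mul_left ((-1:ℝ)/3)).add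
      ((hcomp R3 3 hR3 (-2)).const_mul_left ((7:ℝ)/6))).add
      ((hcomp R3 3 hR3 (-1)).const_mul_left ((-3:ℝ)/2))).add
      ((hcomp R3 3 hR3 0).const_mul_left ((5:ℝ)/6))).add
      ((hcomp R3 3 hR3 1).const_mul_left ((-1:ℝ)/6))
    refine b.congr_left fun h => ?_
    simp only [candidateFlux, Matrix.cons_val_one, Matrix.head_cons, Matrix.cons_val_zero,
      Matrix.cons_val_two, Matrix.tail_cons]
    rw [show x - h - 2*h = x + (-3)*h by ring, show x - h - h = x + (-2)*h by ring,
      show x - h + 2*h = x + 1*h by ring, show x - h + h = x + 0*h by ring,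
      show x - h = x + (-1)*h by ring,
      hval3 ((-3)*h), hval3 ((-2)*h), hval3 ((-1)*h), hval3 (0*h), hval3 (1*h)]
    ring
  have hL : (fun h : ℝ => (∑ k : Fin 3, dlin k * candidateFlux f x h k)
      - (∑ k : Fin 3, dlin k * candidateFlux f (x-h) h k) - h * iteratedDeriv 1 f x)
      =O[𝓝[>] (0:ℝ)] fun h => h ^ 6 := by
    have b := ((((((hcomp R6 6 hR6 (-3)).const_mul_left ((-1:ℝ)/30)).add
      ((hcomp R6 6 hR6 (-2)).const_mul_left ((1:ℝ)/4))).add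
      ((hcomp R6 6 hR6 (-1)).const_mul_left ((-1:ℝ)))).add
      ((hcomp R6 6 hR6 0).const_mul_left ((1:ℝ)/3))).add
      ((hcomp R6 6 hR6 1).const_mul_left ((1:ℝ)/2))).add
      ((hcomp R6 6 hR6 2).const_mul_left ((-1:ℝ)/20))
    refine b.congr_left fun h => ?_
    simp only [Fin.sum_univ_three, candidateFlux, dlin, Matrix.cons_val_one, Matrix.head_cons,
      Matrix.cons_val_zero, Matrix.cons_val_two, Matrix.tail_cons]
    rw [show x - h - 2*h = x + (-3)*h by ring, show x - h - h = x + (-2)*h by ring,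
      show x - h + 2*h = x + 1*h by ring, show x - h + h = x + 0*h by ring,
      show x - 2*h = x + (-2)*h by ring, show x + 2*h = x + 2*h by ring,
      show x + h = x + 1*h by ring, show x - h = x + (-1)*h by ring,
      show f x = f (x + 0*h) by rw [show x + 0*h = x by ring],
      hval6 ((-3)*h), hval6 ((-2)*h), hval6 ((-1)*h), hval6 (0*h), hval6 (1*h), hval6 (2*h)]
    ring
  have p1 : (fun h : ℝ => (ωp 1 h - dlin 1) * (candidateFlux f x h 1 - candidateFlux f x h 0))
      =O[𝓝[>] (0:ℝ)] fun h => h ^ 6 :=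
    ((hO 1).1.mul hA1).congr_right fun h => by ring
  have p2 : (fun h : ℝ => (ωp 2 h - dlin 2) * (candidateFlux f x h 2 - candidateFlux f x h 0))
      =O[𝓝[>] (0:ℝ)] fun h => h ^ 6 :=
    ((hO 2).1.mul hA2).congr_right fun h => by ring
  have q1 : (fun h : ℝ => (ωm 1 h - dlin 1) * (candidateFlux f (x-h) h 1 - candidateFlux f (x-h) h 0))
      =O[𝓝[>] (0:ℝ)] fun h => h ^ 6 :=
    ((hO 1).2.mul hB1).congr_right fun h => by ring
  have q2 : (fun h : ℝ => (ωm 2 h - dlin 2) * (candidateFlux f (x-h) h 2 - candidateFlux f (x-h) h 0))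
      =O[𝓝[>] (0:ℝ)] fun h => h ^ 6 :=
    ((hO 2).2.mul hB2).congr_right fun h => by ring
  have hG : (fun h : ℝ => ((∑ k : Fin 3, dlin k * candidateFlux f x h k)
      - (∑ k : Fin 3, dlin k * candidateFlux f (x-h) h k) - h * iteratedDeriv 1 f x
      + (ωp 1 h - dlin 1) * (candidateFlux f x h 1 - candidateFlux f x h 0)
      + (ωp 2 h - dlin 2) * (candidateFlux f x h 2 - candidateFlux f x h 0))
      - (ωm 1 h - dlin 1) * (candidateFlux f (x-h) h 1 - candidateFlux f (x-h) h 0)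
      - (ωm 2 h - dlin 2) * (candidateFlux f (x-h) h 2 - candidateFlux f (x-h) h 0))
      =O[𝓝[>] (0:ℝ)] fun h => h ^ 6 := (((hL.add p1).add p2).sub q1).sub q2
  obtain ⟨C, hC⟩ := hG.bound
  rw [isBigO_iff]
  refine ⟨C, ?_⟩
  filter_upwards [hC, Ioo_mem_nhdsGT_of_mem (by exact ⟨le_refl 0, hδ⟩ : (0:ℝ) ∈ Set.Ico 0 δ)]
    with h hCh hh
  obtain ⟨hsp, hsm⟩ := hsum h hh
  have hpos : (0:ℝ) < h := hh.1
  have hne : h ≠ 0 := ne_of_gt hpos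
  have hTeq : (1/h) * ((∑ k : Fin 3, ωp k h * candidateFlux f x h k)
      - (∑ k : Fin 3, ωm k h * candidateFlux f (x - h) h k)) - deriv f x
      = (1/h) * (((∑ k : Fin 3, dlin k * candidateFlux f x h k)
      - (∑ k : Fin 3, dlin k * candidateFlux f (x-h) h k) - h * iteratedDeriv 1 f x
      + (ωp 1 h - dlin 1) * (candidateFlux f x h 1 - candidateFlux f x h 0)
      + (ωp 2 h - dlin 2) * (candidateFlux f x h 2 - candidateFlux f x h 0)
      - (ωm 1 h - dlin 1) * (candidateFlux f (x-h) h 1 - candidateFlux f (x-h) h 0)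
      - (ωm 2 h - dlin 2) * (candidateFlux f (x-h) h 2 - candidateFlux f (x-h) h 0))) := by
    simp only [Fin.sum_univ_three] at hsp hsm ⊢
    rw [show deriv f x = iteratedDeriv 1 f x by rw [iteratedDeriv_one],
      show ωp 0 h = 1 - ωp 1 h - ωp 2 h by linarith,
      show ωm 0 h = 1 - ωm 1 h - ωm 2 h by linarith]
    simp only [dlin, Matrix.cons_val_zero, Matrix.cons_val_one, Matrix.head_cons,
      Matrix.cons_val_two, Matrix.tail_cons]
    field_simp
    ring
  rw [hTeq]
  have h6 : ‖h ^ 6‖ = h * ‖h ^ 5‖ := by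
    rw [Real.norm_eq_abs, Real.norm_eq_abs, abs_of_pos (pow_pos hpos 6),
      abs_of_pos (pow_pos hpos 5)]
    ring
  rw [norm_mul, Real.norm_eq_abs (1/h), abs_of_pos (by positivity : (0:ℝ) < 1/h)]
  calc (1/h) * ‖_‖ ≤ (1/h) * (C * (h * ‖h ^ 5‖)) := by
        rw [← h6]; exact mul_le_mul_of_nonneg_left hCh (by positivity)
    _ = C * ‖h ^ 5‖ := by field_simp
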